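/- In a finite directed graph where every vertex can reach the goal set and every cycle has strictly positive total cost, the Bellman equation J(x) = min over successors x' of (c(x,x') + J(x')) for x outside the goal, with J = 0 on the goal, has a unique solution, and this solution equals the minimum cost over all paths from x to the goal set. -/

import Mathlib

/-!
A solution `J` of the Bellman equation is a lower bound for the cost of every path to the
goal, by telescoping `J` along the path. It is also attained: following minimizing successors
from `x` must reach the goal, since a loop of such steps would telescope to total cost zero.
Hence every solution is the optimal cost, which gives uniqueness. For existence, positive
cycles allow loops to be cut out of paths, so the optimal cost is a minimum over the finitely
many paths of length at most `card V`, and it satisfies the Bellman equation by splitting off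
the first step.
-/

section BellmanEquation

open Finset

universe u

variable {V : Type u} {E : V → V → Prop} {c : V → V → ℝ} {Goal : Set V} {J : V → ℝ}

def pathCost (c : V → V → ℝ) (σ : ℕ → V) (n : ℕ) : ℝ :=
  ∑ k ∈ range n, c (σ k) (σ (k + 1))

def IsWalk (E : V → V → Prop) (σ : ℕ → V) (n : ℕ) : Prop :=
  ∀ k < n, E (σ k) (σ (k + 1))

def IsGoalPath (E : V → V → Prop) (Goal : Set V) (x : V) (σ : ℕ → V) (N : ℕ) : Prop :=
  σ 0 = x ∧ IsWalk E σ N ∧ (∀ k < N, σ k ∉ Goal) ∧ σ N ∈ Goal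

def goalPathCosts (E : V → V → Prop) (c : V → V → ℝ) (Goal : Set V) (x : V) : Set ℝ :=
  {r | ∃ σ N, IsGoalPath E Goal x σ N ∧ r = pathCost c σ N}

def IsBellmanSolution (E : V → V → Prop) (c : V → V → ℝ) (Goal : Set V) (J : V → ℝ) :
    Prop :=
  (∀ x ∈ Goal, J x = 0) ∧ ∀ x ∉ Goal, IsLeast {r | ∃ y, E x y ∧ r = c x y + J y} (J x)

def AllCyclesPositive (E : V → V → Prop) (c : V → V → ℝ) : Prop :=
  ∀ σ n, 0 < n → IsWalk E σ n → σ n = σ 0 → 0 < pathCost c σ n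

lemma pathCost_congr {σ τ : ℕ → V} {n : ℕ} (h : ∀ k ≤ n, σ k = τ k) :
    pathCost c σ n = pathCost c τ n :=
  sum_congr rfl fun k hk => by
    rw [mem_range] at hk
    rw [h k hk.le, h (k + 1) hk]

lemma pathCost_add (σ : ℕ → V) (m n : ℕ) :
    pathCost c σ (m + n) = pathCost c σ m + pathCost c (fun k => σ (m + k)) n :=
  sum_range_add _ m n

lemma pathCost_succ (σ : ℕ → V) (n : ℕ) :
    pathCost c σ (n + 1) = c (σ 0) (σ 1) + pathCost c (fun k => σ (k + 1)) n := by
  rw [pathCost, sum_range_succ', add_comm]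
  rfl

lemma apply_zero_sub_le_pathCost {σ : ℕ → V} {n : ℕ}
    (h : ∀ k < n, J (σ k) ≤ c (σ k) (σ (k + 1)) + J (σ (k + 1))) :
    J (σ 0) - J (σ n) ≤ pathCost c σ n := by
  rw [← sum_range_sub' (fun k => J (σ k))]
  exact sum_le_sum fun k hk => by linarith [h k (mem_range.1 hk)]

lemma apply_zero_sub_eq_pathCost {σ : ℕ → V} {n : ℕ}
    (h : ∀ k < n, J (σ k) = c (σ k) (σ (k + 1)) + J (σ (k + 1))) :
    J (σ 0) - J (σ n) = pathCost c σ n := by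
  rw [← sum_range_sub' (fun k => J (σ k))]
  exact sum_congr rfl fun k hk => by linarith [h k (mem_range.1 hk)]

lemma goalPathCosts_of_mem {x : V} (hx : x ∈ Goal) : goalPathCosts E c Goal x = {0} := by
  ext r
  constructor
  · rintro ⟨σ, N, ⟨h0, -, hnot, -⟩, rfl⟩
    cases N with
    | zero => rfl
    | succ n => exact absurd (h0 ▸ hx) (hnot 0 n.succ_pos)
  · rintro rfl
    exact ⟨fun _ => x, 0, ⟨rfl, fun _ h => absurd h (Nat.not_lt_zero _),
      fun _ h => absurd h (Nat.not_lt_zero _), hx⟩, rfl⟩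

lemma mem_goalPathCosts_iff_of_notMem {x : V} (hx : x ∉ Goal) {r : ℝ} :
    r ∈ goalPathCosts E c Goal x ↔
      ∃ y, E x y ∧ ∃ s ∈ goalPathCosts E c Goal y, r = c x y + s := by
  constructor
  · rintro ⟨σ, N, ⟨rfl, hwalk, hnot, hgoal⟩, rfl⟩
    cases N with
    | zero => exact absurd hgoal hx
    | succ n =>
      exact ⟨σ 1, hwalk 0 n.succ_pos, _, ⟨fun k => σ (k + 1), n, ⟨rfl,
        fun k hk => hwalk (k + 1) (by omega), fun k hk => hnot (k + 1) (by omega), hgoal⟩, rfl⟩,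
        pathCost_succ σ n⟩
  · rintro ⟨_, hxy, s, ⟨τ, M, ⟨rfl, hwalk, hnot, hgoal⟩, rfl⟩, rfl⟩
    let σ : ℕ → V := fun | 0 => x | k + 1 => τ k
    refine ⟨σ, M + 1, ⟨rfl, ?_, ?_, hgoal⟩, (pathCost_succ σ M).symm⟩
    · rintro (_ | k) hk
      exacts [hxy, hwalk k (by omega)]
    · rintro (_ | k) hk
      exacts [hx, hnot k (by omega)]

lemma le_pathCost_of_isBellmanSolution (hJ : IsBellmanSolution E c Goal J) {x : V}
    {σ : ℕ → V} {N : ℕ} (h : IsGoalPath E Goal x σ N) : J x ≤ pathCost c σ N := by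
  obtain ⟨rfl, hwalk, hnot, hgoal⟩ := h
  have := apply_zero_sub_le_pathCost (J := J) fun k hk =>
    (hJ.2 _ (hnot k hk)).2 ⟨_, hwalk k hk, rfl⟩
  rwa [hJ.1 _ hgoal, sub_zero] at this

def cutLoop (σ : ℕ → V) (a d k : ℕ) : V :=
  if k < a then σ k else σ (k + d)

section CutLoop

variable {σ : ℕ → V} {a d : ℕ}

lemma cutLoop_of_le (hloop : σ (a + d) = σ a) {k : ℕ} (hk : k ≤ a) :
    cutLoop σ a d k = σ k := by
  unfold cutLoop
  split_ifs with h
  · rfl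
  · rw [show k = a by omega, hloop]

lemma cutLoop_add (k : ℕ) : cutLoop σ a d (a + k) = σ (a + d + k) := by
  rw [cutLoop, if_neg (by omega)]
  congr 1
  omega

lemma pathCost_cutLoop (hloop : σ (a + d) = σ a) (m : ℕ) :
    pathCost c σ (a + d + m) =
      pathCost c (cutLoop σ a d) (a + m) + pathCost c (fun k => σ (a + k)) d := by
  rw [pathCost_add σ (a + d), pathCost_add σ a, pathCost_add _ a,
    pathCost_congr fun k hk => cutLoop_of_le hloop hk]
  simp only [cutLoop_add]
  ring

lemma isGoalPath_cutLoop {x : V} {m : ℕ} (h : IsGoalPath E Goal x σ (a + d + m))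
    (hloop : σ (a + d) = σ a) : IsGoalPath E Goal x (cutLoop σ a d) (a + m) := by
  obtain ⟨h0, hwalk, hnot, hgoal⟩ := h
  have hstep : ∀ k < a + m, ∃ j < a + d + m,
      cutLoop σ a d k = σ j ∧ cutLoop σ a d (k + 1) = σ (j + 1) := by
    intro k hk
    rcases lt_or_ge k a with hka | hka
    · exact ⟨k, by omega, cutLoop_of_le hloop hka.le, cutLoop_of_le hloop hka⟩
    · obtain ⟨i, rfl⟩ := Nat.exists_eq_add_of_le hka
      exact ⟨a + d + i, by omega, cutLoop_add i, cutLoop_add (i + 1)⟩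
  refine ⟨by rw [cutLoop_of_le hloop (Nat.zero_le a), h0], fun k hk => ?_, fun k hk => ?_, ?_⟩
  · obtain ⟨j, hj, hk0, hk1⟩ := hstep k hk
    rw [hk0, hk1]
    exact hwalk j hj
  · obtain ⟨j, hj, hk0, -⟩ := hstep k hk
    rw [hk0]
    exact hnot j hj
  · rwa [cutLoop_add]

end CutLoop

lemma finite_setOf_pathCost_of_length_le [Finite V] (c : V → V → ℝ) (n : ℕ) :
    {r | ∃ σ M, M ≤ n ∧ r = pathCost c σ M}.Finite := by
  refine (Set.finite_range fun p : (Fin (n + 1) → V) × Fin (n + 1) =>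
    pathCost c (fun k => p.1 (Fin.ofNat (n + 1) k)) p.2).subset ?_
  rintro r ⟨σ, M, hM, rfl⟩
  refine ⟨(fun i => σ i, ⟨M, by omega⟩), pathCost_congr fun k hk => ?_⟩
  change k ≤ M at hk
  change σ (Fin.ofNat (n + 1) k : ℕ) = σ k
  rw [Fin.val_ofNat, Nat.mod_eq_of_lt (by omega)]

variable [Fintype V]

lemma exists_lt_le_card_apply_eq (σ : ℕ → V) :
    ∃ a b, a < b ∧ b ≤ Fintype.card V ∧ σ a = σ b := by
  obtain ⟨i, j, hij, heq⟩ := Fintype.exists_ne_map_eq_of_card_lt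
    (fun k : Fin (Fintype.card V + 1) => σ k) (by simp)
  rcases lt_or_gt_of_ne hij with h | h
  · exact ⟨i, j, h, by omega, heq⟩
  · exact ⟨j, i, h, by omega, heq.symm⟩

lemma exists_goalPath_length_le_card (hcycle : AllCyclesPositive E c)
    {x : V} {σ : ℕ → V} {N : ℕ} (h : IsGoalPath E Goal x σ N) :
    ∃ τ M, M ≤ Fintype.card V ∧ IsGoalPath E Goal x τ M ∧
      pathCost c τ M ≤ pathCost c σ N := by
  induction N using Nat.strong_induction_on generalizing σ with
  | _ N ih =>
    by_cases hN : N ≤ Fintype.card V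
    · exact ⟨σ, N, hN, h, le_rfl⟩
    obtain ⟨a, b, hab, hb, hloop⟩ := exists_lt_le_card_apply_eq σ
    obtain ⟨d, rfl⟩ := Nat.exists_eq_add_of_le hab.le
    obtain ⟨m, rfl⟩ := Nat.exists_eq_add_of_le (show a + d ≤ N by omega)
    have hpos : 0 < pathCost c (fun k => σ (a + k)) d :=
      hcycle _ d (by omega) (fun k hk => h.2.1 (a + k) (by omega)) hloop.symm
    obtain ⟨τ, M, hM, hτ, hcost⟩ := ih (a + m) (by omega) (isGoalPath_cutLoop h hloop.symm)
    exact ⟨τ, M, hM, hτ, by linarith [pathCost_cutLoop (c := c) hloop.symm m]⟩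

lemma exists_isLeast_goalPathCosts (hreach : ∀ x, ∃ σ N, IsGoalPath E Goal x σ N)
    (hcycle : AllCyclesPositive E c) (x : V) :
    ∃ r, IsLeast (goalPathCosts E c Goal x) r := by
  set T := {r | ∃ σ M, M ≤ Fintype.card V ∧ IsGoalPath E Goal x σ M ∧ r = pathCost c σ M}
  have hfin : T.Finite := (finite_setOf_pathCost_of_length_le c (Fintype.card V)).subset
    fun r ⟨σ, M, hM, _, hr⟩ => ⟨σ, M, hM, hr⟩
  have hne : T.Nonempty := by
    obtain ⟨σ, N, h⟩ := hreach x
    obtain ⟨τ, M, hM, hτ, -⟩ := exists_goalPath_length_le_card hcycle h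
    exact ⟨_, τ, M, hM, hτ, rfl⟩
  obtain ⟨r, ⟨σ, M, -, hσ, rfl⟩, hmin⟩ := Set.exists_min_image T id hfin hne
  refine ⟨_, ⟨σ, M, hσ, rfl⟩, ?_⟩
  rintro _ ⟨ρ, N, hρ, rfl⟩
  obtain ⟨τ, K, hK, hτ, hcost⟩ := exists_goalPath_length_le_card hcycle hρ
  exact (hmin _ ⟨τ, K, hK, hτ, rfl⟩).trans hcost

lemma exists_isBellmanSolution (hreach : ∀ x, ∃ σ N, IsGoalPath E Goal x σ N)
    (hcycle : AllCyclesPositive E c) :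
    ∃ J, IsBellmanSolution E c Goal J := by
  choose J hJ using exists_isLeast_goalPathCosts hreach hcycle
  refine ⟨J, fun x hx => by simpa [goalPathCosts_of_mem hx] using (hJ x).1, fun x hx => ?_⟩
  have hle : ∀ y, E x y → J x ≤ c x y + J y := fun y hxy =>
    (hJ x).2 ((mem_goalPathCosts_iff_of_notMem hx).2 ⟨y, hxy, J y, (hJ y).1, rfl⟩)
  obtain ⟨y, hxy, s, hs, hJx⟩ := (mem_goalPathCosts_iff_of_notMem hx).1 (hJ x).1
  have hge : c x y + J y ≤ J x := by linarith [(hJ y).2 hs]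
  exact ⟨⟨y, hxy, le_antisymm (hle y hxy) hge⟩,
    fun r ⟨y', hxy', hr⟩ => hr ▸ hle y' hxy'⟩

lemma mem_goalPathCosts_of_isBellmanSolution
    (hcycle : AllCyclesPositive E c)
    (hJ : IsBellmanSolution E c Goal J) (x : V) : J x ∈ goalPathCosts E c Goal x := by
  classical
  choose! next hnextE hnextJ using fun v (hv : v ∉ Goal) =>
    show ∃ w, E v w ∧ J v = c v w + J w from (hJ.2 v hv).1
  let σ : ℕ → V := fun k => next^[k] x
  have hstep : ∀ k, σ k ∉ Goal →
      E (σ k) (σ (k + 1)) ∧ J (σ k) = c (σ k) (σ (k + 1)) + J (σ (k + 1)) := fun k hk => by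
    simp only [σ, Function.iterate_succ_apply']
    exact ⟨hnextE _ hk, hnextJ _ hk⟩
  have hhit : ∃ n, σ n ∈ Goal := by
    by_contra! hnot
    obtain ⟨a, b, hab, -, hloop⟩ := exists_lt_le_card_apply_eq σ
    obtain ⟨d, rfl⟩ := Nat.exists_eq_add_of_le hab.le
    have hzero := apply_zero_sub_eq_pathCost (J := J) (σ := fun k => σ (a + k)) (n := d)
      fun k _ => (hstep _ (hnot _)).2
    rw [add_zero, ← hloop, sub_self] at hzero
    exact (hcycle (fun k => σ (a + k)) d (by omega) (fun k _ => (hstep _ (hnot _)).1)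
      hloop.symm).ne hzero
  refine ⟨σ, Nat.find hhit, ⟨rfl, fun k hk => (hstep k (Nat.find_min hhit hk)).1,
    fun k hk => Nat.find_min hhit hk, Nat.find_spec hhit⟩, ?_⟩
  have := apply_zero_sub_eq_pathCost (J := J) (σ := σ) (n := Nat.find hhit)
    fun k hk => (hstep k (Nat.find_min hhit hk)).2
  rwa [hJ.1 _ (Nat.find_spec hhit), sub_zero] at this

lemma isLeast_goalPathCosts_of_isBellmanSolution
    (hcycle : AllCyclesPositive E c)
    (hJ : IsBellmanSolution E c Goal J) (x : V) : IsLeast (goalPathCosts E c Goal x) (J x) :=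
  ⟨mem_goalPathCosts_of_isBellmanSolution hcycle hJ x,
    fun _ ⟨_, _, h, hr⟩ => hr ▸ le_pathCost_of_isBellmanSolution hJ h⟩

/-- In a finite directed graph where every vertex can reach the goal set and every
directed cycle has strictly positive total cost, the Bellman equation (with `J = 0` on
the goal) has a unique solution, and this solution equals the minimum cost over all
paths from each vertex to the goal set. -/
theorem stmt_15 {V : Type*} [Fintype V] (E : V → V → Prop) (c : V → V → ℝ)
    (Goal : Set V)
    -- every vertex can reach the goal
    (hreach : ∀ x, ∃ (σ : ℕ → V) (N : ℕ), σ 0 = x ∧ (∀ k < N, E (σ k) (σ (k+1))) ∧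
      (∀ k < N, σ k ∉ Goal) ∧ σ N ∈ Goal)
    -- every directed cycle has strictly positive total cost
    (hcycle : ∀ (σ : ℕ → V) (n : ℕ), 0 < n → (∀ k < n, E (σ k) (σ (k+1))) →
      σ n = σ 0 → 0 < ∑ k ∈ Finset.range n, c (σ k) (σ (k+1))) :
    (∃! J : V → ℝ, (∀ x ∈ Goal, J x = 0) ∧
      ∀ x ∉ Goal, IsLeast {r | ∃ y, E x y ∧ r = c x y + J y} (J x)) ∧
    (∀ J : V → ℝ,
      ((∀ x ∈ Goal, J x = 0) ∧
        ∀ x ∉ Goal, IsLeast {r | ∃ y, E x y ∧ r = c x y + J y} (J x)) →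
      ∀ x, IsLeast {r | ∃ (σ : ℕ → V) (N : ℕ), σ 0 = x ∧
        (∀ k < N, E (σ k) (σ (k+1))) ∧ (∀ k < N, σ k ∉ Goal) ∧ σ N ∈ Goal ∧
        r = ∑ k ∈ Finset.range N, c (σ k) (σ (k+1))} (J x)) := by
  have hleast : ∀ J, IsBellmanSolution E c Goal J →
      ∀ x, IsLeast (goalPathCosts E c Goal x) (J x) :=
    fun J => isLeast_goalPathCosts_of_isBellmanSolution hcycle
  obtain ⟨J, hJ⟩ := exists_isBellmanSolution hreach hcycle
  refine ⟨⟨J, hJ, fun K hK => funext fun x => (hleast K hK x).unique (hleast J hJ x)⟩,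
    fun K hK x => ?_⟩
  simpa only [goalPathCosts, IsGoalPath, IsWalk, pathCost, and_assoc] using hleast K hK x
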